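/- arXiv:0902.2916 — 4 statements merged into one kernel-verified Lean document; each statement's English description precedes it below -/
import Mathlib

section
/- Suppose f_n is a sequence of measurable functions with sup_n |f_n|_p ≤ ν(p) for all p ∈ (a,b), and |f_n - h|_{p_i} → 0 for each element p_i of a dense subset {p_i} of (a,b). Then |f_n - h|_p → 0 for every p ∈ (a,b), and moreover |h|_p ≤ ν(p) for all p ∈ (a,b), i.e. h ∈ G(ν). -/
open MeasureTheory Filter Set
open scoped ENNReal Topology

lemma interp_eLpNorm {X : Type*} [MeasurableSpace X] (μ : Measure X)
    {g : X → ℝ} (hg : Measurable g) {p₁ p p₂ s : ℝ}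
    (h1 : 0 < p₁) (hs : 0 < s) (hs1 : s < 1) (h2 : 0 < p₂)
    (hp : p = s * p₁ + (1 - s) * p₂) :
    eLpNorm g (ENNReal.ofReal p) μ ≤
      eLpNorm g (ENNReal.ofReal p₁) μ ^ (s * p₁ / p) *
      eLpNorm g (ENNReal.ofReal p₂) μ ^ ((1 - s) * p₂ / p) := by
  have hp0 : 0 < p := by nlinarith
  set F : X → ℝ≥0∞ := fun x => (‖g x‖₊ : ℝ≥0∞) with hF_def
  have hF : AEMeasurable F μ := hg.nnnorm.coe_nnreal_ennreal.aemeasurable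
  have hs1' : 0 < 1 - s := by linarith
  have key : ∫⁻ x, F x ^ p ∂μ ≤
      (∫⁻ x, F x ^ p₁ ∂μ) ^ s * (∫⁻ x, F x ^ p₂ ∂μ) ^ (1 - s) := by
    have hconj : (1/s).HolderConjugate (1/(1-s)) := by
      constructor
      · rw [one_div, one_div, inv_inv, inv_inv, inv_one]; ring
      · exact one_div_pos.mpr hs
      · exact one_div_pos.mpr hs1'
    calc ∫⁻ x, F x ^ p ∂μ
        = ∫⁻ x, ((fun x => F x ^ (s*p₁)) * fun x => F x ^ ((1-s)*p₂)) x ∂μ := by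
          apply lintegral_congr; intro x
          simp only [Pi.mul_apply]
          rcases eq_or_ne (F x) 0 with h0 | h0
          · rw [h0, ENNReal.zero_rpow_of_pos hp0, ENNReal.zero_rpow_of_pos (by positivity),
              ENNReal.zero_rpow_of_pos (by positivity), mul_zero]
          · rw [hp, ENNReal.rpow_add _ _ h0 ENNReal.coe_ne_top]
      _ ≤ (∫⁻ x, (F x ^ (s*p₁)) ^ (1/s) ∂μ) ^ (1/(1/s)) *
          (∫⁻ x, (F x ^ ((1-s)*p₂)) ^ (1/(1-s)) ∂μ) ^ (1/(1/(1-s))) :=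
          ENNReal.lintegral_mul_le_Lp_mul_Lq μ hconj (hF.pow_const _) (hF.pow_const _)
      _ = (∫⁻ x, F x ^ p₁ ∂μ) ^ s * (∫⁻ x, F x ^ p₂ ∂μ) ^ (1 - s) := by
          simp_rw [← ENNReal.rpow_mul]
          rw [one_div_one_div, one_div_one_div,
            show s*p₁*(1/s) = p₁ by field_simp,
            show (1-s)*p₂*(1/(1-s)) = p₂ by field_simp]
  have e : ∀ r : ℝ, 0 < r →
      eLpNorm g (ENNReal.ofReal r) μ = (∫⁻ x, F x ^ r ∂μ) ^ (1/r) := by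
    intro r hr
    rw [eLpNorm_eq_lintegral_rpow_enorm_toReal (by simp [hr.not_ge]) (by simp),
      ENNReal.toReal_ofReal hr.le]
    rfl
  rw [e p hp0, e p₁ h1, e p₂ h2, ← ENNReal.rpow_mul, ← ENNReal.rpow_mul,
    show 1/p₁ * (s * p₁ / p) = s * (1/p) by field_simp,
    show 1/p₂ * ((1-s) * p₂ / p) = (1-s) * (1/p) by field_simp,
    ENNReal.rpow_mul _ s, ENNReal.rpow_mul _ (1-s),
    ← ENNReal.mul_rpow_of_nonneg _ _ (by positivity)]
  exact ENNReal.rpow_le_rpow key (by positivity)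

/-- if `sup_n |f_n|_p ≤ ν(p)` on `(a,b)` and `|f_n - h|_{p_i} → 0` on a dense
subset `D` of `(a,b)`, then `|f_n - h|_p → 0` for every `p ∈ (a,b)` and `|h|_p ≤ ν(p)`,
i.e. `h ∈ G(ν)`. -/
theorem dense_Lp_convergence {X : Type*} [MeasurableSpace X]
    (μ : Measure X) [SigmaFinite μ]
    (a b : ℝ) (ha : 1 ≤ a) (hab : a < b)
    (ν : ℝ → ℝ) (hν_pos : ∀ p ∈ Set.Ioo a b, 0 < ν p)
    (hν_cont : ContinuousOn ν (Set.Ioo a b))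
    (f : ℕ → X → ℝ) (h : X → ℝ) (hf : ∀ n, Measurable (f n)) (hh : Measurable h)
    (hbd : ∀ p ∈ Set.Ioo a b, ∀ n,
      eLpNorm (f n) (ENNReal.ofReal p) μ ≤ ENNReal.ofReal (ν p))
    (D : Set ℝ) (hD : D ⊆ Set.Ioo a b) (hDdense : Set.Ioo a b ⊆ closure D)
    (hconv : ∀ pi ∈ D,
      Tendsto (fun n => eLpNorm (f n - h) (ENNReal.ofReal pi) μ) atTop (nhds 0)) :
    (∀ p ∈ Set.Ioo a b,
      Tendsto (fun n => eLpNorm (f n - h) (ENNReal.ofReal p) μ) atTop (nhds 0)) ∧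
    (∀ p ∈ Set.Ioo a b, eLpNorm h (ENNReal.ofReal p) μ ≤ ENNReal.ofReal (ν p)) := by
  -- from convergence at q, get the bound on h at q
  have hbound : ∀ q ∈ Set.Ioo a b,
      Tendsto (fun n => eLpNorm (f n - h) (ENNReal.ofReal q) μ) atTop (nhds 0) →
      eLpNorm h (ENNReal.ofReal q) μ ≤ ENNReal.ofReal (ν q) := by
    intro q hq htend
    have h1q : (1:ℝ≥0∞) ≤ ENNReal.ofReal q := by
      rw [ENNReal.one_le_ofReal]; linarith [hq.1]
    have step : ∀ n, eLpNorm h (ENNReal.ofReal q) μ ≤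
        ENNReal.ofReal (ν q) + eLpNorm (f n - h) (ENNReal.ofReal q) μ := by
      intro n
      have heq : h = f n - (f n - h) := by ext x; simp
      calc eLpNorm h (ENNReal.ofReal q) μ
          = eLpNorm (f n - (f n - h)) (ENNReal.ofReal q) μ := by rw [← heq]
        _ ≤ eLpNorm (f n) (ENNReal.ofReal q) μ
            + eLpNorm (f n - h) (ENNReal.ofReal q) μ :=
            eLpNorm_sub_le (hf n).aestronglyMeasurable
              ((hf n).sub hh).aestronglyMeasurable h1q
        _ ≤ _ := add_le_add_left (hbd q hq n) _
    have : Tendsto (fun n => ENNReal.ofReal (ν q) +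
        eLpNorm (f n - h) (ENNReal.ofReal q) μ) atTop (nhds (ENNReal.ofReal (ν q))) := by
      simpa using Tendsto.const_add (ENNReal.ofReal (ν q)) htend
    exact ge_of_tendsto this (Eventually.of_forall step)
  have part1 : ∀ p ∈ Set.Ioo a b,
      Tendsto (fun n => eLpNorm (f n - h) (ENNReal.ofReal p) μ) atTop (nhds 0) := by
    intro p hp
    -- pick p₁ ∈ D ∩ (a, p), p₂ ∈ D ∩ (p, b)
    obtain ⟨hap, hpb⟩ := hp
    have hmem1 : (a + p) / 2 ∈ Set.Ioo a b := by constructor <;> nlinarith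
    have hmem2 : (p + b) / 2 ∈ Set.Ioo a b := by constructor <;> nlinarith
    obtain ⟨p₁, hp₁o, hp₁D⟩ := mem_closure_iff.mp (hDdense hmem1) (Set.Ioo a p)
      isOpen_Ioo (by constructor <;> nlinarith)
    obtain ⟨p₂, hp₂o, hp₂D⟩ := mem_closure_iff.mp (hDdense hmem2) (Set.Ioo p b)
      isOpen_Ioo (by constructor <;> nlinarith)
    have hp₁ : a < p₁ ∧ p₁ < p := hp₁o
    have hp₂ : p < p₂ ∧ p₂ < b := hp₂o
    have h1 : 0 < p₁ := by linarith
    have h2 : 0 < p₂ := by linarith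
    set s : ℝ := (p₂ - p) / (p₂ - p₁) with hs_def
    have hd : 0 < p₂ - p₁ := by linarith
    have hs : 0 < s := div_pos (by linarith) hd
    have hs1 : s < 1 := by rw [hs_def, div_lt_one hd]; linarith
    have hps : p = s * p₁ + (1 - s) * p₂ := by rw [hs_def]; field_simp; ring
    -- bound on eLpNorm (f n - h) at p₂
    have hhp₂ : eLpNorm h (ENNReal.ofReal p₂) μ ≤ ENNReal.ofReal (ν p₂) :=
      hbound p₂ (hD hp₂D).out (hconv p₂ hp₂D)
    have h1q₂ : (1:ℝ≥0∞) ≤ ENNReal.ofReal p₂ := by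
      rw [ENNReal.one_le_ofReal]; linarith [(hD hp₂D).1]
    have hC : ∀ n, eLpNorm (f n - h) (ENNReal.ofReal p₂) μ ≤
        ENNReal.ofReal (ν p₂) + ENNReal.ofReal (ν p₂) := fun n =>
      (eLpNorm_sub_le (hf n).aestronglyMeasurable hh.aestronglyMeasurable h1q₂).trans
        (add_le_add (hbd p₂ (hD hp₂D) n) hhp₂)
    set C : ℝ≥0∞ := ENNReal.ofReal (ν p₂) + ENNReal.ofReal (ν p₂) with hC_def
    have hCne : C ≠ ⊤ := by simp [hC_def]
    -- interpolation bound
    have hub : ∀ n, eLpNorm (f n - h) (ENNReal.ofReal p) μ ≤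
        eLpNorm (f n - h) (ENNReal.ofReal p₁) μ ^ (s * p₁ / p) *
          C ^ ((1 - s) * p₂ / p) := by
      intro n
      refine (interp_eLpNorm μ ((hf n).sub hh) h1 hs hs1 h2 hps).trans ?_
      exact mul_le_mul_left (by rfl) _ |>.trans
        (mul_le_mul_right (ENNReal.rpow_le_rpow (hC n) (div_nonneg (mul_nonneg (by linarith) h2.le) (by linarith))) _)
    have hp0 : 0 < p := by linarith
    have hα : 0 < s * p₁ / p := div_pos (mul_pos hs h1) hp0
    have hβ : (0:ℝ) ≤ (1 - s) * p₂ / p :=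
      div_nonneg (mul_nonneg (by linarith) h2.le) hp0.le
    have hlim : Tendsto (fun n => eLpNorm (f n - h) (ENNReal.ofReal p₁) μ ^ (s * p₁ / p) *
        C ^ ((1 - s) * p₂ / p)) atTop (nhds 0) := by
      have h0 : Tendsto (fun n => eLpNorm (f n - h) (ENNReal.ofReal p₁) μ ^ (s * p₁ / p))
          atTop (nhds 0) := by
        have := (hconv p₁ hp₁D).ennrpow_const (s * p₁ / p)
        simpa [ENNReal.zero_rpow_of_pos hα] using this
      have := ENNReal.Tendsto.mul_const h0 (Or.inr (by
        exact ENNReal.rpow_ne_top_of_nonneg hβ hCne))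
      simpa using this
    exact tendsto_of_tendsto_of_tendsto_of_le_of_le tendsto_const_nhds hlim
      (fun n => zero_le) hub
  exact ⟨part1, fun p hp => hbound p hp (part1 p hp)⟩
end

section
/- Let ξ be a standard Gaussian variable on ([0,1], Lebesgue) and ξ_n = ξ · 1{|ξ| ≤ n}. Then: (i) each ξ_n ∈ G⁰(ψ_{1/2}); (ii) |ξ_n − ξ|_p → 0 for every p ∈ (1,∞); (iii) sup_n ‖ξ_n‖_{G(ψ_{1/2})} < ∞; but (iv) ‖ξ_n − ξ‖_{G(ψ_{1/2})} does not converge to 0. -/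
open MeasureTheory ProbabilityTheory Filter Set
open scoped ENNReal Topology

/-- The `G(ψ_{1/2})` norm with `ψ_{1/2}(p) = √p`, `p ∈ [1,∞)`. -/
noncomputable def GHalfNorm (μ : Measure ℝ) (f : ℝ → ℝ) : ℝ≥0∞ :=
  ⨆ p : Set.Ici (1:ℝ),
    eLpNorm f (ENNReal.ofReal p.1) μ / ENNReal.ofReal (Real.sqrt p.1)

lemma ptwise (p : ℝ) (hp : 1 ≤ p) (y : ℝ) :
    |y| ^ p ≤ (2*p) ^ (p/2) * Real.exp (y^2/4) := by
  have hp0 : 0 < p := lt_of_lt_of_le one_pos hp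
  have h2p : 0 < 2*p := by linarith
  set u : ℝ := y^2 / (2*p) with hu
  have hu0 : 0 ≤ u := by positivity
  have h1 : |y| ^ p = ((2*p) * u) ^ (p/2) := by
    rw [hu, mul_div_cancel₀ _ (ne_of_gt h2p), ← sq_abs, ← Real.rpow_natCast |y| 2,
      ← Real.rpow_mul (abs_nonneg y)]
    congr 1
    ring
  rw [h1, Real.mul_rpow (le_of_lt h2p) hu0]
  gcongr _ * ?_
  have h2 : u ^ (p/2) ≤ Real.exp (u - 1) ^ (p/2) :=
    Real.rpow_le_rpow hu0 (by linarith [Real.add_one_le_exp (u-1)]) (by positivity)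
  refine h2.trans ?_
  rw [← Real.exp_mul]
  apply Real.exp_le_exp.2
  have : (u - 1) * (p/2) ≤ u * (p/2) := by nlinarith
  have heq : u * (p/2) = y^2/4 := by
    rw [hu]; field_simp; ring
  linarith


lemma gauss_moment (p : ℝ) (hp : 1 ≤ p) :
    ∫⁻ y, (‖y‖₊ : ℝ≥0∞) ^ p ∂(gaussianReal 0 1)
      ≤ ENNReal.ofReal (Real.sqrt 2 * (2*p) ^ (p/2)) := by
  have hp0 : (0:ℝ) ≤ p := by linarith
  rw [gaussianReal_of_var_ne_zero 0 one_ne_zero,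
    lintegral_withDensity_eq_lintegral_mul _ (measurable_gaussianPDF 0 1)
      (by fun_prop : Measurable (fun y : ℝ => (‖y‖₊ : ℝ≥0∞) ^ p))]
  simp only [Pi.mul_apply]
  have hpt : ∀ y : ℝ, gaussianPDF 0 1 y * (‖y‖₊ : ℝ≥0∞) ^ p
      ≤ ENNReal.ofReal ((2*p) ^ (p/2) * ((Real.sqrt (2*Real.pi))⁻¹ * Real.exp (-(1/4) * y^2))) := by
    intro y
    have h1 : (‖y‖₊ : ℝ≥0∞) ^ p = ENNReal.ofReal (|y| ^ p) := by
      rw [← enorm_eq_nnnorm, Real.enorm_eq_ofReal_abs, ← ENNReal.ofReal_rpow_of_nonneg (abs_nonneg y) hp0]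
    rw [gaussianPDF, h1, ← ENNReal.ofReal_mul (gaussianPDFReal_nonneg 0 1 y)]
    apply ENNReal.ofReal_le_ofReal
    have hpdf : gaussianPDFReal 0 1 y = (Real.sqrt (2*Real.pi))⁻¹ * Real.exp (-(y^2)/2) := by
      simp [gaussianPDFReal]
    rw [hpdf]
    have := ptwise p hp y
    calc (Real.sqrt (2*Real.pi))⁻¹ * Real.exp (-(y^2)/2) * |y| ^ p
        ≤ (Real.sqrt (2*Real.pi))⁻¹ * Real.exp (-(y^2)/2) * ((2*p) ^ (p/2) * Real.exp (y^2/4)) := by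
          gcongr
      _ = (2*p) ^ (p/2) * ((Real.sqrt (2*Real.pi))⁻¹ * Real.exp (-(1/4) * y^2)) := by
          rw [mul_assoc, mul_comm (Real.exp (-(y^2)/2)), mul_assoc, ← Real.exp_add]
          ring_nf
  calc ∫⁻ y, gaussianPDF 0 1 y * (‖y‖₊ : ℝ≥0∞) ^ p
      ≤ ∫⁻ y, ENNReal.ofReal ((2*p) ^ (p/2) * ((Real.sqrt (2*Real.pi))⁻¹ * Real.exp (-(1/4) * y^2))) :=
        lintegral_mono hpt
    _ = ENNReal.ofReal (∫ y, (2*p) ^ (p/2) * ((Real.sqrt (2*Real.pi))⁻¹ * Real.exp (-(1/4) * y^2))) := by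
        rw [← ofReal_integral_eq_lintegral_ofReal]
        · exact (((integrable_exp_neg_mul_sq (by norm_num : (0:ℝ) < 1/4)).const_mul _).const_mul _)
        · filter_upwards with y; positivity
    _ ≤ ENNReal.ofReal (Real.sqrt 2 * (2*p) ^ (p/2)) := by
        apply ENNReal.ofReal_le_ofReal
        rw [integral_const_mul, integral_const_mul, integral_gaussian]
        have h4 : Real.sqrt (Real.pi / (1/4)) = Real.sqrt 2 * Real.sqrt (2*Real.pi) := by
          rw [← Real.sqrt_mul (by norm_num : (0:ℝ) ≤ 2)]
          congr 1; ring
        rw [h4]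
        have hs : (0:ℝ) < Real.sqrt (2*Real.pi) := Real.sqrt_pos.2 (by positivity)
        have h5 : (Real.sqrt (2*Real.pi))⁻¹ * (Real.sqrt 2 * Real.sqrt (2*Real.pi)) = Real.sqrt 2 := by
          field_simp
        rw [h5, mul_comm]

lemma elpnorm_gauss_le (p : ℝ) (hp : 1 ≤ p) (g : ℝ → ℝ) (hg : ∀ y, ‖g y‖ ≤ ‖y‖) :
    eLpNorm g (ENNReal.ofReal p) (gaussianReal 0 1) ≤ ENNReal.ofReal (2 * Real.sqrt p) := by
  have hp0 : (0:ℝ) < p := lt_of_lt_of_le one_pos hp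
  have hne : ENNReal.ofReal p ≠ 0 := by simp [ENNReal.ofReal_eq_zero]; linarith
  have htop : ENNReal.ofReal p ≠ ∞ := ENNReal.ofReal_ne_top
  calc eLpNorm g (ENNReal.ofReal p) (gaussianReal 0 1)
      ≤ eLpNorm (fun y : ℝ => y) (ENNReal.ofReal p) (gaussianReal 0 1) := eLpNorm_mono hg
    _ ≤ ENNReal.ofReal (2 * Real.sqrt p) := by
        rw [eLpNorm_eq_lintegral_rpow_enorm_toReal hne htop, ENNReal.toReal_ofReal hp0.le]
        have h1 : (∫⁻ y : ℝ, (‖y‖₊ : ℝ≥0∞) ^ p ∂(gaussianReal 0 1)) ^ (1/p)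
            ≤ (ENNReal.ofReal (Real.sqrt 2 * (2*p) ^ (p/2))) ^ (1/p) :=
          ENNReal.rpow_le_rpow (gauss_moment p hp) (by positivity)
        refine h1.trans ?_
        rw [ENNReal.ofReal_rpow_of_nonneg (by positivity) (by positivity)]
        apply ENNReal.ofReal_le_ofReal
        have hp2 : (0:ℝ) ≤ 2*p := by linarith
        rw [Real.mul_rpow (Real.sqrt_nonneg 2) (Real.rpow_nonneg hp2 _),
          ← Real.rpow_mul hp2]
        have e1 : p/2 * (1/p) = 1/2 := by field_simp
        have e2 : (2*p) ^ ((1:ℝ)/2) = Real.sqrt 2 * Real.sqrt p := by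
          rw [← Real.sqrt_eq_rpow, Real.sqrt_mul (by norm_num : (0:ℝ) ≤ 2)]
        have e3 : (Real.sqrt 2) ^ ((1:ℝ)/p) ≤ Real.sqrt 2 :=
          (Real.rpow_le_rpow_of_exponent_le (Real.one_le_sqrt.2 one_le_two)
            (by rw [div_le_one hp0]; linarith)).trans_eq (Real.rpow_one _)
        rw [e1, e2]
        calc Real.sqrt 2 ^ ((1:ℝ)/p) * (Real.sqrt 2 * Real.sqrt p)
            ≤ Real.sqrt 2 * (Real.sqrt 2 * Real.sqrt p) := by
              gcongr
          _ = 2 * Real.sqrt p := by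
              rw [← mul_assoc, Real.mul_self_sqrt (by norm_num : (0:ℝ) ≤ 2)]

lemma pdf_eq (x : ℝ) :
    gaussianPDFReal 0 1 x = (Real.sqrt (2*Real.pi))⁻¹ * Real.exp (-(x^2)/2) := by
  simp [gaussianPDFReal]

lemma lower_bound (n : ℕ) :
    ENNReal.ofReal ((Real.sqrt (2*Real.pi))⁻¹ * Real.exp (-2))
      ≤ eLpNorm (fun y : ℝ => (if |y| ≤ (n:ℝ) then y else 0) - y)
          (ENNReal.ofReal (((n:ℝ)+2)^2)) (gaussianReal 0 1)
        / ENNReal.ofReal (Real.sqrt (((n:ℝ)+2)^2)) := by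
  set a : ℝ := (n:ℝ)+2 with ha
  have ha2 : (2:ℝ) ≤ a := by
    have := Nat.cast_nonneg (α:=ℝ) n; linarith
  have ha0 : (0:ℝ) < a := by linarith
  set p : ℝ := a^2 with hp
  have hp1 : (1:ℝ) ≤ p := by nlinarith
  have hp0 : (0:ℝ) < p := by linarith
  have hne : ENNReal.ofReal p ≠ 0 := by simp [ENNReal.ofReal_eq_zero]; linarith
  have hsa : Real.sqrt (a^2) = a := Real.sqrt_sq ha0.le
  set g : ℝ → ℝ := fun y => (if |y| ≤ (n:ℝ) then y else 0) - y with hg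
  have hgm : Measurable g := by
    apply Measurable.sub _ measurable_id
    exact Measurable.ite (measurableSet_le (by fun_prop) measurable_const) measurable_id measurable_const
  set c : ℝ := gaussianPDFReal 0 1 (a+1) with hc
  have hc0 : 0 < c := gaussianPDFReal_pos 0 1 (a+1) one_ne_zero
  -- lintegral lower bound
  have key : ENNReal.ofReal (a ^ p * c) ≤ ∫⁻ y, (‖g y‖₊ : ℝ≥0∞) ^ p ∂(gaussianReal 0 1) := by
    have h1 : ∫⁻ y in Set.Icc a (a+1), (‖g y‖₊ : ℝ≥0∞) ^ p ∂(gaussianReal 0 1)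
        ≤ ∫⁻ y, (‖g y‖₊ : ℝ≥0∞) ^ p ∂(gaussianReal 0 1) := setLIntegral_le_lintegral _ _
    refine le_trans ?_ h1
    rw [gaussianReal_of_var_ne_zero 0 one_ne_zero, restrict_withDensity measurableSet_Icc,
      lintegral_withDensity_eq_lintegral_mul _ (measurable_gaussianPDF 0 1) (by fun_prop)]
    have h2 : ∀ y ∈ Set.Icc a (a+1),
        ENNReal.ofReal (a ^ p * c) ≤ (gaussianPDF 0 1 * fun y => (‖g y‖₊ : ℝ≥0∞) ^ p) y := by
      intro y hy
      obtain ⟨hy1, hy2⟩ := hy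
      have hyn : ¬ |y| ≤ (n:ℝ) := by
        rw [not_le, abs_of_nonneg (by linarith : (0:ℝ) ≤ y)]; linarith
      have hgy : ‖g y‖ = y := by
        have hiy : (if |y| ≤ (n:ℝ) then y else 0) = 0 := if_neg hyn
        rw [hg]
        simp only [hiy, zero_sub, norm_neg, Real.norm_eq_abs]
        exact abs_of_nonneg (by linarith)
      have hpdf : c ≤ gaussianPDFReal 0 1 y := by
        rw [hc, pdf_eq, pdf_eq]
        have hyy : y^2 ≤ (a+1)^2 := by nlinarith
        have hex : Real.exp (-((a+1)^2)/2) ≤ Real.exp (-(y^2)/2) := by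
          apply Real.exp_le_exp.2; nlinarith [hyy]
        exact mul_le_mul_of_nonneg_left hex (by positivity)
      simp only [Pi.mul_apply, gaussianPDF]
      rw [← enorm_eq_nnnorm, ← ofReal_norm, ENNReal.ofReal_rpow_of_nonneg (norm_nonneg (g y)) hp0.le,
        ← ENNReal.ofReal_mul (gaussianPDFReal_nonneg 0 1 y)]
      apply ENNReal.ofReal_le_ofReal
      rw [hgy]
      have hap : a ^ p ≤ y ^ p := Real.rpow_le_rpow ha0.le hy1 hp0.le
      calc a ^ p * c ≤ y ^ p * gaussianPDFReal 0 1 y := by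
            exact mul_le_mul hap hpdf hc0.le (Real.rpow_nonneg (le_trans ha0.le hy1) p)
        _ = gaussianPDFReal 0 1 y * y ^ p := mul_comm _ _
    calc ENNReal.ofReal (a ^ p * c)
        = ∫⁻ _ in Set.Icc a (a+1), ENNReal.ofReal (a ^ p * c) ∂volume := by
          rw [setLIntegral_const, Real.volume_Icc]
          norm_num
      _ ≤ ∫⁻ y in Set.Icc a (a+1), (gaussianPDF 0 1 * fun y => (‖g y‖₊ : ℝ≥0∞) ^ p) y ∂volume :=
          setLIntegral_mono ((measurable_gaussianPDF 0 1).mul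
            (by fun_prop : Measurable fun y => ((‖g y‖₊ : ℝ≥0∞) ^ p))) h2
  -- conclude
  have hane : ENNReal.ofReal a ≠ 0 := by simp [ENNReal.ofReal_eq_zero]; linarith
  rw [hsa, ENNReal.le_div_iff_mul_le (Or.inl hane) (Or.inl ENNReal.ofReal_ne_top),
    ← ENNReal.ofReal_mul (by positivity)]
  have help : eLpNorm g (ENNReal.ofReal p) (gaussianReal 0 1)
      = (∫⁻ y, (‖g y‖₊ : ℝ≥0∞) ^ p ∂(gaussianReal 0 1)) ^ (1/p) := by
    rw [eLpNorm_eq_lintegral_rpow_enorm_toReal hne ENNReal.ofReal_ne_top,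
      ENNReal.toReal_ofReal hp0.le]
    rfl
  rw [help]
  have h6 : ENNReal.ofReal ((a ^ p * c) ^ (1/p))
      ≤ (∫⁻ y, (‖g y‖₊ : ℝ≥0∞) ^ p ∂(gaussianReal 0 1)) ^ (1/p) := by
    rw [← ENNReal.ofReal_rpow_of_nonneg (by positivity) (by positivity)]
    exact ENNReal.rpow_le_rpow key (by positivity)
  refine le_trans ?_ h6
  apply ENNReal.ofReal_le_ofReal
  have h7 : (a ^ p * c) ^ (1/p) = a * c ^ (1/p) := by
    rw [Real.mul_rpow (Real.rpow_nonneg ha0.le _) hc0.le, ← Real.rpow_mul ha0.le,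
      mul_one_div, div_self hp0.ne', Real.rpow_one]
  rw [h7]
  have hinv1 : (Real.sqrt (2*Real.pi))⁻¹ ≤ 1 := by
    rw [inv_le_one_iff₀]
    right
    rw [Real.one_le_sqrt]
    nlinarith [Real.pi_gt_three]
  have hinv0 : (0:ℝ) < (Real.sqrt (2*Real.pi))⁻¹ := by positivity
  have hc1 : (Real.sqrt (2*Real.pi))⁻¹ * Real.exp (-2) ≤ c ^ (1/p) := by
    rw [hc, pdf_eq, Real.mul_rpow hinv0.le (Real.exp_pos _).le, ← Real.exp_mul]
    have i1 : (Real.sqrt (2*Real.pi))⁻¹ ≤ ((Real.sqrt (2*Real.pi))⁻¹) ^ (1/p) := by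
      nth_rewrite 1 [← Real.rpow_one ((Real.sqrt (2*Real.pi))⁻¹)]
      apply Real.rpow_le_rpow_of_exponent_ge hinv0 hinv1
      rw [div_le_one hp0]; linarith
    have i2 : Real.exp (-2) ≤ Real.exp (-((a+1)^2)/2 * (1/p)) := by
      apply Real.exp_le_exp.2
      rw [hp, div_mul_eq_mul_div, mul_one_div, div_div]
      rw [neg_div, neg_le_neg_iff, div_le_iff₀ (by positivity)]
      nlinarith
    calc (Real.sqrt (2*Real.pi))⁻¹ * Real.exp (-2)
        ≤ ((Real.sqrt (2*Real.pi))⁻¹) ^ (1/p) * Real.exp (-((a+1)^2)/2 * (1/p)) :=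
          mul_le_mul i1 i2 (Real.exp_pos _).le (by positivity)
      _ = _ := rfl
  calc (Real.sqrt (2*Real.pi))⁻¹ * Real.exp (-2) * a
      = a * ((Real.sqrt (2*Real.pi))⁻¹ * Real.exp (-2)) := by ring
    _ ≤ a * c ^ (1/p) := by
        exact mul_le_mul_of_nonneg_left hc1 ha0.le

/-- Remark 2: for a standard Gaussian `ξ` on `([0,1], Lebesgue)` and
`ξ_n = ξ·1{|ξ| ≤ n}`: (i) `ξ_n ∈ G⁰(ψ_{1/2})`; (ii) `|ξ_n - ξ|_p → 0` for `p ∈ (1,∞)`;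
(iii) `sup_n ‖ξ_n‖_{G(ψ_{1/2})} < ∞`; but (iv) `‖ξ_n - ξ‖_{G(ψ_{1/2})} ↛ 0`. -/
theorem gaussian_truncation_counterexample
    (ξ : ℝ → ℝ) (hξ : Measurable ξ)
    (hgauss : Measure.map ξ (volume.restrict (Set.Icc (0:ℝ) 1)) = gaussianReal 0 1)
    (ξn : ℕ → ℝ → ℝ)
    (hξn : ∀ n x, ξn n x = if |ξ x| ≤ (n : ℝ) then ξ x else 0) :
    (∀ n, Tendsto
        (fun p : ℝ => eLpNorm (ξn n) (ENNReal.ofReal p) (volume.restrict (Set.Icc (0:ℝ) 1)) /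
          ENNReal.ofReal (Real.sqrt p)) atTop (nhds 0)) ∧
    (∀ p : ℝ, 1 < p → Tendsto
        (fun n => eLpNorm (ξn n - ξ) (ENNReal.ofReal p) (volume.restrict (Set.Icc (0:ℝ) 1)))
        atTop (nhds 0)) ∧
    (∃ C : ℝ≥0∞, C < ∞ ∧ ∀ n, GHalfNorm (volume.restrict (Set.Icc (0:ℝ) 1)) (ξn n) ≤ C) ∧
    ¬ Tendsto (fun n => GHalfNorm (volume.restrict (Set.Icc (0:ℝ) 1)) (ξn n - ξ))
        atTop (nhds 0) := by
  set μ : Measure ℝ := volume.restrict (Set.Icc (0:ℝ) 1) with hμ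
  have hμuniv : μ Set.univ = 1 := by
    rw [hμ, Measure.restrict_apply_univ, Real.volume_Icc]
    norm_num
  have hξnm : ∀ k, Measurable (ξn k) := by
    intro k
    have : ξn k = fun x => if |ξ x| ≤ (k:ℝ) then ξ x else 0 := funext (hξn k)
    rw [this]
    exact Measurable.ite (measurableSet_le hξ.abs measurable_const) hξ measurable_const
  have hsqrt : Tendsto Real.sqrt atTop atTop := by
    apply tendsto_atTop_atTop.2
    intro b
    refine ⟨(max b 0)^2, fun x hx => le_trans (le_max_left b 0) ?_⟩
    rw [← Real.sqrt_sq (le_max_right b 0)]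
    exact Real.sqrt_le_sqrt hx
  refine ⟨?_, ?_, ?_, ?_⟩
  -- (i)
  · intro n
    have hbd : ∀ q : ℝ≥0∞, eLpNorm (ξn n) q μ ≤ ENNReal.ofReal (n:ℝ) := by
      intro q
      refine (eLpNorm_le_of_ae_bound (C := (n:ℝ)) (ae_of_all _ fun x => ?_)).trans ?_
      · rw [hξn]
        split
        · rwa [Real.norm_eq_abs]
        · simp
      · rw [hμuniv, ENNReal.one_rpow, one_mul]
    have hupper : Tendsto (fun p : ℝ => ENNReal.ofReal ((n:ℝ) / Real.sqrt p)) atTop (nhds 0) := by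
      have h1 : Tendsto (fun p : ℝ => (n:ℝ) / Real.sqrt p) atTop (nhds 0) :=
        tendsto_const_nhds.div_atTop hsqrt
      have := ENNReal.tendsto_ofReal h1
      rwa [ENNReal.ofReal_zero] at this
    refine tendsto_of_tendsto_of_tendsto_of_le_of_le' tendsto_const_nhds hupper
      (Eventually.of_forall fun p => zero_le) ?_
    filter_upwards [eventually_ge_atTop (1:ℝ)] with p hp
    have hsp : 0 < Real.sqrt p := Real.sqrt_pos.2 (by linarith)
    calc eLpNorm (ξn n) (ENNReal.ofReal p) μ / ENNReal.ofReal (Real.sqrt p)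
        ≤ ENNReal.ofReal (n:ℝ) / ENNReal.ofReal (Real.sqrt p) :=
          ENNReal.div_le_div_right (hbd _) _
      _ = ENNReal.ofReal ((n:ℝ) / Real.sqrt p) := (ENNReal.ofReal_div_of_pos hsp).symm
  -- (ii)
  · intro p hp
    have hp1 : (1:ℝ) ≤ p := hp.le
    have hp0 : (0:ℝ) < p := by linarith
    have hne : ENNReal.ofReal p ≠ 0 := by simp [ENNReal.ofReal_eq_zero]; linarith
    set F : ℕ → ℝ → ℝ≥0∞ := fun k x => (‖(ξn k - ξ) x‖₊ : ℝ≥0∞) ^ p with hF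
    have hform : ∀ k, eLpNorm (ξn k - ξ) (ENNReal.ofReal p) μ = (∫⁻ x, F k x ∂μ) ^ (1/p) := by
      intro k
      rw [eLpNorm_eq_lintegral_rpow_enorm_toReal hne ENNReal.ofReal_ne_top,
        ENNReal.toReal_ofReal hp0.le]
      rfl
    have hbound : ∀ k, ∀ᵐ x ∂μ, F k x ≤ (‖ξ x‖₊ : ℝ≥0∞) ^ p := by
      intro k
      refine ae_of_all _ fun x => ?_
      have : ‖(ξn k - ξ) x‖ ≤ ‖ξ x‖ := by
        simp only [Pi.sub_apply, hξn]
        split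
        · simp
        · simp
      exact ENNReal.rpow_le_rpow (by exact_mod_cast this) hp0.le
    have hfin : (∫⁻ x, (‖ξ x‖₊ : ℝ≥0∞) ^ p ∂μ) ≠ ∞ := by
      have : (∫⁻ x, (‖ξ x‖₊ : ℝ≥0∞) ^ p ∂μ) = ∫⁻ y, (‖y‖₊ : ℝ≥0∞) ^ p ∂(gaussianReal 0 1) := by
        rw [← hgauss, lintegral_map (by fun_prop) hξ]
      rw [this]
      exact ((gauss_moment p hp1).trans_lt ENNReal.ofReal_lt_top).ne
    have hlim : ∀ᵐ x ∂μ, Tendsto (fun k => F k x) atTop (nhds 0) := by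
      refine ae_of_all _ fun x => ?_
      apply tendsto_atTop_of_eventually_const (i₀ := ⌈|ξ x|⌉₊)
      intro k hk
      have hxk : |ξ x| ≤ (k:ℝ) := (Nat.le_ceil _).trans (by exact_mod_cast hk)
      rw [hF]
      simp only [Pi.sub_apply, hξn, if_pos hxk, sub_self, nnnorm_zero, ENNReal.coe_zero]
      exact ENNReal.zero_rpow_of_pos hp0
    have hI : Tendsto (fun k => ∫⁻ x, F k x ∂μ) atTop (nhds 0) := by
      have := tendsto_lintegral_of_dominated_convergence (μ := μ)
        (fun x => (‖ξ x‖₊ : ℝ≥0∞) ^ p)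
        (fun k => by fun_prop (disch := exact ((hξnm k).sub hξ)))
        hbound hfin hlim
      rwa [lintegral_zero] at this
    have h2 := hI.ennrpow_const (1/p)
    rw [ENNReal.zero_rpow_of_pos (by positivity)] at h2
    simp only [hform]
    exact h2
  -- (iii)
  · refine ⟨ENNReal.ofReal 2, ENNReal.ofReal_lt_top, fun n => ?_⟩
    rw [GHalfNorm]
    refine iSup_le fun q => ?_
    obtain ⟨p, hp⟩ := q
    have hp1 : (1:ℝ) ≤ p := hp
    set gF : ℝ → ℝ := fun t => if |t| ≤ (n:ℝ) then t else 0 with hgF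
    have hgFm : Measurable gF :=
      Measurable.ite (measurableSet_le (by fun_prop) measurable_const) measurable_id measurable_const
    have hcomp : ξn n = gF ∘ ξ := funext fun x => hξn n x
    have hmap : eLpNorm (ξn n) (ENNReal.ofReal p) μ
        = eLpNorm gF (ENNReal.ofReal p) (gaussianReal 0 1) := by
      rw [hcomp, ← eLpNorm_map_measure (by rw [hgauss]; exact hgFm.aestronglyMeasurable)
        hξ.aemeasurable, hgauss]
    have hsp : 0 < Real.sqrt p := Real.sqrt_pos.2 (by linarith)
    calc eLpNorm (ξn n) (ENNReal.ofReal p) μ / ENNReal.ofReal (Real.sqrt p)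
        ≤ ENNReal.ofReal (2 * Real.sqrt p) / ENNReal.ofReal (Real.sqrt p) := by
          apply ENNReal.div_le_div_right
          rw [hmap]
          refine elpnorm_gauss_le p hp1 gF fun y => ?_
          rw [hgF]
          dsimp only
          split
          · exact le_refl _
          · simp
      _ = ENNReal.ofReal 2 * ENNReal.ofReal (Real.sqrt p) / ENNReal.ofReal (Real.sqrt p) := by
          rw [← ENNReal.ofReal_mul (by norm_num)]
      _ ≤ ENNReal.ofReal 2 := by
          rw [mul_div_assoc]
          exact mul_le_of_le_one_right zero_le (ENNReal.div_self_le_one)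
  -- (iv)
  · intro h
    have hc0 : (0:ℝ≥0∞) < ENNReal.ofReal ((Real.sqrt (2*Real.pi))⁻¹ * Real.exp (-2)) :=
      ENNReal.ofReal_pos.2 (by positivity)
    obtain ⟨n, hn⟩ := (h.eventually_lt_const hc0).exists
    refine absurd hn (not_lt.2 ?_)
    have hmem : ((n:ℝ)+2)^2 ∈ Set.Ici (1:ℝ) := by
      have := Nat.cast_nonneg (α := ℝ) n
      simp only [Set.mem_Ici]
      nlinarith
    rw [GHalfNorm]
    refine le_trans ?_ (le_iSup _ (⟨((n:ℝ)+2)^2, hmem⟩ : Set.Ici (1:ℝ)))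
    have hcomp2 : (ξn n - ξ) = (fun y => (if |y| ≤ (n:ℝ) then y else 0) - y) ∘ ξ :=
      funext fun x => by simp [Pi.sub_apply, hξn]
    have hm2 : Measurable (fun y : ℝ => (if |y| ≤ (n:ℝ) then y else 0) - y) :=
      ((Measurable.ite (measurableSet_le (by fun_prop) measurable_const) measurable_id
        measurable_const).sub measurable_id)
    dsimp only
    rw [hcomp2, ← eLpNorm_map_measure (by rw [hgauss]; exact hm2.aestronglyMeasurable)
      hξ.aemeasurable, hgauss]
    exact lower_bound n
end

section
/- The subspace G⁰(ψ) = {f ∈ G(ψ) : |f|_p/ψ(p) → 0 as ψ(p) → ∞} is a closed linear subspace of G(ψ). -/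
open MeasureTheory Filter Set
open scoped ENNReal Topology

/-- The Bilateral Grand Lebesgue norm `‖f‖_{G(ψ)} = sup_{p ∈ (a,b)} |f|_p / ψ(p)`. -/
noncomputable def GNorm {X : Type*} [MeasurableSpace X] (μ : Measure X) (a b : ℝ)
    (ψ : ℝ → ℝ) (f : X → ℝ) : ℝ≥0∞ :=
  ⨆ p : Set.Ioo a b, eLpNorm f (ENNReal.ofReal p.1) μ / ENNReal.ofReal (ψ p.1)

/-- Membership in the subspace `G⁰(ψ)`: finite `G(ψ)` norm and `|f|_p/ψ(p) → 0`
as `ψ(p) → ∞`. -/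
def MemG0 {X : Type*} [MeasurableSpace X] (μ : Measure X) (a b : ℝ)
    (ψ : ℝ → ℝ) (f : X → ℝ) : Prop :=
  GNorm μ a b ψ f < ∞ ∧
  ∀ ε : ℝ, 0 < ε → ∃ M : ℝ, ∀ p ∈ Set.Ioo a b, M ≤ ψ p →
    eLpNorm f (ENNReal.ofReal p) μ ≤ ENNReal.ofReal (ε * ψ p)

lemma elp_le_gnorm {X : Type*} [MeasurableSpace X] (μ : Measure X) (a b : ℝ)
    (ψ : ℝ → ℝ) (f : X → ℝ) {p : ℝ} (hp : p ∈ Set.Ioo a b) (hψ : 0 < ψ p) :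
    eLpNorm f (ENNReal.ofReal p) μ ≤ GNorm μ a b ψ f * ENNReal.ofReal (ψ p) := by
  have h : eLpNorm f (ENNReal.ofReal p) μ / ENNReal.ofReal (ψ p) ≤ GNorm μ a b ψ f :=
    le_iSup (fun q : Set.Ioo a b =>
      eLpNorm f (ENNReal.ofReal q.1) μ / ENNReal.ofReal (ψ q.1)) ⟨p, hp⟩
  rwa [ENNReal.div_le_iff_le_mul (Or.inl (by simp [hψ])) (Or.inl ENNReal.ofReal_ne_top)] at h

lemma gnorm_le {X : Type*} [MeasurableSpace X] (μ : Measure X) (a b : ℝ)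
    (ψ : ℝ → ℝ) (f : X → ℝ) {C : ℝ≥0∞} (hψ : ∀ p ∈ Set.Ioo a b, 0 < ψ p)
    (h : ∀ p ∈ Set.Ioo a b, eLpNorm f (ENNReal.ofReal p) μ ≤ C * ENNReal.ofReal (ψ p)) :
    GNorm μ a b ψ f ≤ C := by
  refine iSup_le fun ⟨p, hp⟩ => ?_
  have h0 : ENNReal.ofReal (ψ p) ≠ 0 := by simp [hψ p hp]
  rw [ENNReal.div_le_iff_le_mul (Or.inl h0) (Or.inl ENNReal.ofReal_ne_top)]
  exact h p hp

/-- `G⁰(ψ)` is a closed linear subspace of `G(ψ)`. -/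
theorem G0_closed_subspace {X : Type*} [MeasurableSpace X]
    (μ : Measure X) [SigmaFinite μ]
    (a b : ℝ) (ha : 1 ≤ a) (hab : a < b)
    (ψ : ℝ → ℝ)
    (hψ_pos : ∀ p ∈ Set.Ioo a b, 0 < ψ p) (hψ_cont : ContinuousOn ψ (Set.Ioo a b))
    (hψ_unbdd : ∀ M : ℝ, ∃ p ∈ Set.Ioo a b, M < ψ p) :
    -- zero function
    (MemG0 μ a b ψ (0 : X → ℝ)) ∧
    -- closed under addition
    (∀ f g : X → ℝ, Measurable f → Measurable g →
      MemG0 μ a b ψ f → MemG0 μ a b ψ g → MemG0 μ a b ψ (f + g)) ∧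
    -- closed under scalar multiplication
    (∀ f : X → ℝ, ∀ c : ℝ, MemG0 μ a b ψ f → MemG0 μ a b ψ (c • f)) ∧
    -- closed under G(ψ)-norm limits
    (∀ f : ℕ → X → ℝ, (∀ n, Measurable (f n)) → (∀ n, MemG0 μ a b ψ (f n)) →
      ∀ g : X → ℝ, Measurable g → GNorm μ a b ψ g < ∞ →
      Tendsto (fun n => GNorm μ a b ψ (f n - g)) atTop (nhds 0) →
      MemG0 μ a b ψ g) := by
  have hone : ∀ p ∈ Set.Ioo a b, (1 : ℝ≥0∞) ≤ ENNReal.ofReal p := fun p hp =>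
    ENNReal.one_le_ofReal.mpr (by linarith [hp.1])
  refine ⟨?_, ?_, ?_, ?_⟩
  · constructor
    · have : GNorm μ a b ψ (0 : X → ℝ) = 0 := by
        simp [GNorm, eLpNorm_zero]
      simp [this]
    · intro ε hε
      exact ⟨0, fun p hp _ => by simp [eLpNorm_zero]⟩
  · rintro f g hfm hgm ⟨hf1, hf2⟩ ⟨hg1, hg2⟩
    constructor
    · have hle : GNorm μ a b ψ (f + g) ≤ GNorm μ a b ψ f + GNorm μ a b ψ g := by
        apply gnorm_le μ a b ψ _ hψ_pos
        intro p hp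
        calc eLpNorm (f + g) (ENNReal.ofReal p) μ
            ≤ eLpNorm f (ENNReal.ofReal p) μ + eLpNorm g (ENNReal.ofReal p) μ :=
              eLpNorm_add_le hfm.aestronglyMeasurable hgm.aestronglyMeasurable (hone p hp)
          _ ≤ GNorm μ a b ψ f * ENNReal.ofReal (ψ p) + GNorm μ a b ψ g * ENNReal.ofReal (ψ p) :=
              add_le_add (elp_le_gnorm μ a b ψ f hp (hψ_pos p hp))
                (elp_le_gnorm μ a b ψ g hp (hψ_pos p hp))
          _ = (GNorm μ a b ψ f + GNorm μ a b ψ g) * ENNReal.ofReal (ψ p) := by ring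
      exact lt_of_le_of_lt hle (ENNReal.add_lt_top.mpr ⟨hf1, hg1⟩)
    · intro ε hε
      obtain ⟨M₁, hM₁⟩ := hf2 (ε / 2) (by linarith)
      obtain ⟨M₂, hM₂⟩ := hg2 (ε / 2) (by linarith)
      refine ⟨max M₁ M₂, fun p hp hMp => ?_⟩
      have h1 := hM₁ p hp (le_trans (le_max_left _ _) hMp)
      have h2 := hM₂ p hp (le_trans (le_max_right _ _) hMp)
      calc eLpNorm (f + g) (ENNReal.ofReal p) μ
          ≤ eLpNorm f (ENNReal.ofReal p) μ + eLpNorm g (ENNReal.ofReal p) μ :=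
            eLpNorm_add_le hfm.aestronglyMeasurable hgm.aestronglyMeasurable (hone p hp)
        _ ≤ ENNReal.ofReal (ε / 2 * ψ p) + ENNReal.ofReal (ε / 2 * ψ p) := add_le_add h1 h2
        _ = ENNReal.ofReal (ε * ψ p) := by
            have hψp := (hψ_pos p hp).le
            have hn : (0:ℝ) ≤ ε / 2 * ψ p := by nlinarith
            rw [← ENNReal.ofReal_add hn hn]
            congr 1; ring
  · rintro f c ⟨hf1, hf2⟩
    have hsmul : ∀ p : ℝ≥0∞, eLpNorm (c • f) p μ = ENNReal.ofReal |c| * eLpNorm f p μ := by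
      intro p
      rw [eLpNorm_const_smul]
      rw [Real.enorm_eq_ofReal_abs]
    constructor
    · have hle : GNorm μ a b ψ (c • f) ≤ ENNReal.ofReal |c| * GNorm μ a b ψ f := by
        apply gnorm_le μ a b ψ _ hψ_pos
        intro p hp
        rw [hsmul]
        calc ENNReal.ofReal |c| * eLpNorm f (ENNReal.ofReal p) μ
            ≤ ENNReal.ofReal |c| * (GNorm μ a b ψ f * ENNReal.ofReal (ψ p)) :=
              mul_le_mul_right (elp_le_gnorm μ a b ψ f hp (hψ_pos p hp)) _
          _ = ENNReal.ofReal |c| * GNorm μ a b ψ f * ENNReal.ofReal (ψ p) := by ring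
      exact lt_of_le_of_lt hle (ENNReal.mul_lt_top ENNReal.ofReal_lt_top hf1)
    · intro ε hε
      have hc1 : (0:ℝ) < |c| + 1 := by positivity
      obtain ⟨M, hM⟩ := hf2 (ε / (|c| + 1)) (by positivity)
      refine ⟨M, fun p hp hMp => ?_⟩
      rw [hsmul]
      calc ENNReal.ofReal |c| * eLpNorm f (ENNReal.ofReal p) μ
          ≤ ENNReal.ofReal |c| * ENNReal.ofReal (ε / (|c| + 1) * ψ p) :=
            mul_le_mul_right (hM p hp hMp) _
        _ = ENNReal.ofReal (|c| * (ε / (|c| + 1) * ψ p)) := by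
            rw [← ENNReal.ofReal_mul (abs_nonneg c)]
        _ ≤ ENNReal.ofReal (ε * ψ p) := by
            apply ENNReal.ofReal_le_ofReal
            have hψp := (hψ_pos p hp).le
            have : |c| * (ε / (|c| + 1)) ≤ ε := by
              have h1 : |c| / (|c| + 1) ≤ 1 := by
                rw [div_le_one hc1]; linarith
              calc |c| * (ε / (|c| + 1)) = ε * (|c| / (|c| + 1)) := by ring
                _ ≤ ε * 1 := by nlinarith
                _ = ε := mul_one ε
            nlinarith
  · rintro f hfm hf0 g hgm hgfin htend
    refine ⟨hgfin, fun ε hε => ?_⟩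
    have hε2 : (0:ℝ≥0∞) < ENNReal.ofReal (ε / 2) := by
      simp [ENNReal.ofReal_pos]; linarith
    have := htend.eventually_lt_const hε2
    obtain ⟨n, hn⟩ := this.exists
    obtain ⟨M, hM⟩ := (hf0 n).2 (ε / 2) (by linarith)
    refine ⟨M, fun p hp hMp => ?_⟩
    have hψp := hψ_pos p hp
    have hsub : eLpNorm (g - f n) (ENNReal.ofReal p) μ
        ≤ ENNReal.ofReal (ε / 2) * ENNReal.ofReal (ψ p) := by
      rw [eLpNorm_sub_comm]
      exact le_trans (elp_le_gnorm μ a b ψ (f n - g) hp hψp)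
        (mul_le_mul_left hn.le _)
    calc eLpNorm g (ENNReal.ofReal p) μ
        = eLpNorm ((g - f n) + f n) (ENNReal.ofReal p) μ := by
          congr 1; ext x; simp
      _ ≤ eLpNorm (g - f n) (ENNReal.ofReal p) μ + eLpNorm (f n) (ENNReal.ofReal p) μ :=
          eLpNorm_add_le ((hgm.sub (hfm n)).aestronglyMeasurable)
            (hfm n).aestronglyMeasurable (hone p hp)
      _ ≤ ENNReal.ofReal (ε / 2) * ENNReal.ofReal (ψ p) + ENNReal.ofReal (ε / 2 * ψ p) :=
          add_le_add hsub (hM p hp hMp)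
      _ = ENNReal.ofReal (ε * ψ p) := by
          have hψp' := hψp.le
          rw [← ENNReal.ofReal_mul (by linarith)]
          rw [← ENNReal.ofReal_add (by nlinarith) (by nlinarith)]
          congr 1; ring
end

section
/- Symmetric rearrangement preserves the Grand Lebesgue norm: if u : ℝ^d → [0,∞] is measurable and u* is its symmetric decreasing (Schwarz) rearrangement, then ‖u*‖_{G(ψ)} = ‖u‖_{G(ψ)} for every ψ ∈ Ψ(a,b). -/
open MeasureTheory Filter Set
open scoped ENNReal Topology

lemma lint_eq {X : Type*} [MeasurableSpace X] (μ : Measure X) (f g : X → ℝ)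
    (hf : Measurable f) (hg : Measurable g) (hfn : ∀ x, 0 ≤ f x) (hgn : ∀ x, 0 ≤ g x)
    (hequi : ∀ lam : ℝ, 0 < lam → μ {x | lam < f x} = μ {x | lam < g x})
    {p : ℝ} (hp : 0 < p) :
    ∫⁻ x, (‖f x‖₊ : ℝ≥0∞) ^ p ∂μ = ∫⁻ x, (‖g x‖₊ : ℝ≥0∞) ^ p ∂μ := by
  have key : ∀ (h : X → ℝ), (∀ x, 0 ≤ h x) →
      (fun x => (‖h x‖₊ : ℝ≥0∞) ^ p) = fun x => ENNReal.ofReal (h x ^ p) := by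
    intro h hn
    funext x
    rw [← ENNReal.ofReal_rpow_of_nonneg (hn x) hp.le, ← enorm_eq_nnnorm, ← ofReal_norm,
      Real.norm_of_nonneg (hn x)]
  rw [key f hfn, key g hgn,
    lintegral_rpow_eq_lintegral_meas_lt_mul μ (Filter.Eventually.of_forall hfn)
      hf.aemeasurable hp,
    lintegral_rpow_eq_lintegral_meas_lt_mul μ (Filter.Eventually.of_forall hgn)
      hg.aemeasurable hp]
  congr 1
  refine setLIntegral_congr_fun measurableSet_Ioi ?_
  intro t ht
  beta_reduce
  rw [hequi t ht]

/-- the symmetric decreasing (Schwarz) rearrangement `u*` of a nonnegative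
measurable function `u : ℝ^d → ℝ` (superlevel sets are balls centered at the origin of the
same measure as those of `u`) preserves the Grand Lebesgue norm:
`‖u*‖_{G(ψ)} = ‖u‖_{G(ψ)}` for every `ψ ∈ Ψ(a,b)`. -/
theorem rearrangement_preserves_gnorm (d : ℕ)
    (a b : ℝ) (ha : 1 ≤ a) (hab : a < b)
    (ψ : ℝ → ℝ)
    (hψ_pos : ∀ p ∈ Set.Ioo a b, 0 < ψ p) (hψ_cont : ContinuousOn ψ (Set.Ioo a b))
    (u ustar : EuclideanSpace ℝ (Fin d) → ℝ)
    (hu : Measurable u) (hustar : Measurable ustar)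
    (hu_nonneg : ∀ x, 0 ≤ u x) (hustar_nonneg : ∀ x, 0 ≤ ustar x)
    -- superlevel sets of u* are balls centered at the origin
    (hball : ∀ lam : ℝ, 0 < lam → ∃ r : ℝ, 0 ≤ r ∧
      {x : EuclideanSpace ℝ (Fin d) | lam < ustar x} = Metric.ball 0 r)
    -- u* is equimeasurable with u
    (hequi : ∀ lam : ℝ, 0 < lam →
      volume {x : EuclideanSpace ℝ (Fin d) | lam < ustar x} =
        volume {x : EuclideanSpace ℝ (Fin d) | lam < u x}) :
    GNorm volume a b ψ ustar = GNorm volume a b ψ u := by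
  unfold GNorm
  refine iSup_congr fun p => ?_
  congr 1
  have hp0 : 0 < p.1 := lt_of_lt_of_le one_pos (le_trans ha p.2.1.le)
  have hne : (ENNReal.ofReal p.1) ≠ 0 := by
    simp [ENNReal.ofReal_eq_zero, not_le, hp0]
  rw [eLpNorm_eq_lintegral_rpow_enorm_toReal hne ENNReal.ofReal_ne_top,
    eLpNorm_eq_lintegral_rpow_enorm_toReal hne ENNReal.ofReal_ne_top,
    ENNReal.toReal_ofReal hp0.le]
  simp only [enorm_eq_nnnorm]
  rw [lint_eq volume ustar u hustar hu hustar_nonneg hu_nonneg hequi hp0]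
end
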